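/- Let q ≥ 1 be an integer and let L = (ℓ_1, …, ℓ_d) be a sequence obtained from L_m by finitely many applications of the modification M. Set ℓ_{d+1} = 0 and suppose an eligible index exists; let i be the smallest eligible index. If ℓ_{i+1} = 0 (that is, i = d), then ℓ_i ≥ 4. -/

import Mathlib

/-! Finite sequences `(ℓ_1, …, ℓ_d)` are encoded as lists `L : List ℕ`, where the
`i`-th entry (1-indexed) is `L.getD (i-1) 0`; in particular entries beyond the end
(such as `ℓ_{d+1}`) are read as `0`. -/

/-- The `i`-th entry (0-indexed) of a sequence, with out-of-range entries read as `0`. -/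
def entry (L : List ℕ) (i : ℕ) : ℕ := L.getD i 0

/-- Index `i` (0-indexed) is eligible for the modification: `ℓ_i ≥ 3` and either
`2(ℓ_i − 1) > ℓ_{i+1} + 1` or `ℓ_i = ℓ_{i+1} = 3`. -/
def Eligible (L : List ℕ) (i : ℕ) : Prop :=
  i < L.length ∧ 3 ≤ entry L i ∧
    (entry L (i + 1) + 1 < 2 * (entry L i - 1) ∨ (entry L i = 3 ∧ entry L (i + 1) = 3))

/-- The result of modifying the sequence at index `i`: decrease `ℓ_i` by one and
increase `ℓ_{i+1}` by one (appending a new last entry `1` if `i` is the last index). -/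
def modifyAt (L : List ℕ) (i : ℕ) : List ℕ :=
  if i + 1 < L.length then
    (L.set i (entry L i - 1)).set (i + 1) (entry L (i + 1) + 1)
  else
    L.set i (entry L i - 1) ++ [1]

/-- One application of the modification `M`: it acts at the smallest eligible index. -/
def MStep (L L' : List ℕ) : Prop :=
  ∃ i, Eligible L i ∧ (∀ j < i, ¬ Eligible L j) ∧ L' = modifyAt L i

/-- The short sequence `L_m = (ℓ_1,…,ℓ_{a−1})` with `ℓ_i = 2^(i+1)` for `i ≤ a−2` and
`ℓ_{a−1} = 2q − 2^a + 4`, where `a = ⌊log₂(2q+3)⌋`. -/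
def Lm (q : ℕ) : List ℕ :=
  List.ofFn (fun j : Fin (Nat.log 2 (2 * q + 3) - 1) =>
    if (j : ℕ) + 3 ≤ Nat.log 2 (2 * q + 3) then 2 ^ ((j : ℕ) + 2)
    else 2 * q + 4 - 2 ^ Nat.log 2 (2 * q + 3))

-- helper lemmas
lemma entry_eq_zero_of_le {L : List ℕ} {j : ℕ} (h : L.length ≤ j) : entry L j = 0 :=
  List.getD_eq_default _ _ h

lemma entry_set_ne (L : List ℕ) {i j : ℕ} (a : ℕ) (h : i ≠ j) :
    entry (L.set i a) j = entry L j := by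
  simp [entry, List.getD_eq_getElem?_getD, List.getElem?_set_ne h]

lemma entry_set_self (L : List ℕ) {i : ℕ} (a : ℕ) (h : i < L.length) :
    entry (L.set i a) i = a := by
  simp [entry, List.getD_eq_getElem?_getD, List.getElem?_set_self, h]

lemma entry_append_left (L M : List ℕ) {j : ℕ} (h : j < L.length) :
    entry (L ++ M) j = entry L j := by
  simp [entry, List.getD_eq_getElem?_getD, List.getElem?_append, h]

lemma entry_append_right (L M : List ℕ) {j : ℕ} (h : L.length ≤ j) :
    entry (L ++ M) j = entry M (j - L.length) := by
  simp [entry, List.getD_eq_getElem?_getD, List.getElem?_append, Nat.not_lt.mpr h]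

lemma sum_eq_sum_entry (L : List ℕ) : L.sum = ∑ j ∈ Finset.range L.length, entry L j := by
  induction L with
  | nil => simp
  | cons a t ih =>
    rw [List.sum_cons, List.length_cons, Finset.sum_range_succ']
    have : ∀ j, entry (a :: t) (j + 1) = entry t j := fun j => rfl
    simp only [this]
    rw [ih]
    simp [entry]
    ring

lemma sum_set (L : List ℕ) (i a : ℕ) (h : i < L.length) :
    (L.set i a).sum + entry L i = L.sum + a := by
  induction L generalizing i with
  | nil => simp at h
  | cons b t ih =>
    cases i with
    | zero => simp [entry, List.set]; omega
    | succ i =>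
      simp only [List.set, List.sum_cons]
      have := ih i (by simpa using h)
      have he : entry (b :: t) (i + 1) = entry t i := rfl
      rw [he]; omega

def SeqInv (q : ℕ) (L : List ℕ) : Prop :=
  L.sum = 2 * q ∧ (∀ j, j + 1 < L.length → 2 ≤ entry L j) ∧
    (∀ j, j < L.length → 1 ≤ entry L j)

lemma two_pow_sum (m : ℕ) : ∑ j ∈ Finset.range m, 2 ^ (j + 2) = 2 ^ (m + 2) - 4 := by
  induction m with
  | zero => simp
  | succ m ih =>
    rw [Finset.sum_range_succ, ih]
    have : (4:ℕ) ≤ 2 ^ (m + 2) := by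
      calc (4:ℕ) = 2^2 := rfl
      _ ≤ 2 ^ (m+2) := Nat.pow_le_pow_right (by norm_num) (by omega)
    have h2 : (2:ℕ) ^ (m + 1 + 2) = 2 * 2 ^ (m + 2) := by ring
    omega

lemma inv_Lm (q : ℕ) (hq : 1 ≤ q) : SeqInv q (Lm q) := by
  set a := Nat.log 2 (2 * q + 3) with ha
  have ha2 : 2 ≤ a := by
    rw [ha]
    exact (Nat.le_log_iff_pow_le (by norm_num) (by omega)).mpr (by omega)
  have hpow : 2 ^ a ≤ 2 * q + 3 := Nat.pow_log_le_self 2 (by omega)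
  have hlen : (Lm q).length = a - 1 := by simp [Lm, ha]
  have hentry : ∀ j < a - 1, entry (Lm q) j =
      if j + 3 ≤ a then 2 ^ (j + 2) else 2 * q + 4 - 2 ^ a := by
    intro j hj
    have : entry (Lm q) j = (Lm q)[j]'(by omega) := List.getD_eq_getElem _ _ (by omega)
    rw [this]
    simp [Lm, ha]
  refine ⟨?_, ?_, ?_⟩
  · rw [sum_eq_sum_entry, hlen]
    have hm : a - 1 = (a - 2) + 1 := by omega
    rw [hm, Finset.sum_range_succ]
    have h1 : ∀ j ∈ Finset.range (a - 2), entry (Lm q) j = 2 ^ (j + 2) := by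
      intro j hj
      simp only [Finset.mem_range] at hj
      rw [hentry j (by omega), if_pos (by omega)]
    rw [Finset.sum_congr rfl h1, two_pow_sum]
    rcases Nat.lt_or_ge a 3 with h3 | h3
    · -- a = 2
      have : a = 2 := by omega
      rw [hentry (a-2) (by omega)]
      rw [this]
      norm_num
    · rw [hentry (a-2) (by omega), if_neg (by omega)]
      have : a - 2 + 2 = a := by omega
      rw [this]
      have hpo : 2 ^ a ≥ 4 := by
        calc (4:ℕ) = 2^2 := rfl
        _ ≤ 2 ^ a := Nat.pow_le_pow_right (by norm_num) (by omega)
      omega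
  · intro j hj
    rw [hlen] at hj
    rw [hentry j (by omega), if_pos (by omega)]
    calc (2:ℕ) ≤ 2 ^ 2 := by norm_num
    _ ≤ 2 ^ (j + 2) := Nat.pow_le_pow_right (by norm_num) (by omega)
  · intro j hj
    rw [hlen] at hj
    rw [hentry j (by omega)]
    split
    · exact Nat.one_le_two_pow
    · omega

lemma inv_step {q : ℕ} {L L' : List ℕ} (h : MStep L L') (hI : SeqInv q L) : SeqInv q L' := by
  obtain ⟨i, ⟨hilen, hi3, _⟩, _, rfl⟩ := h
  obtain ⟨hsum, h2, h1⟩ := hI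
  unfold modifyAt
  split
  · rename_i hlt
    -- interior case
    set L1 := L.set i (entry L i - 1) with hL1
    have hlen1 : L1.length = L.length := by simp [hL1]
    have e1 : ∀ j, j ≠ i → entry L1 j = entry L j := fun j hj => entry_set_ne L _ (Ne.symm hj)
    have e1i : entry L1 i = entry L i - 1 := entry_set_self L _ hilen
    set L2 := L1.set (i+1) (entry L (i+1) + 1) with hL2
    have hlen2 : L2.length = L.length := by simp [hL2, hL1]
    have e2 : ∀ j, j ≠ i + 1 → entry L2 j = entry L1 j := fun j hj => entry_set_ne L1 _ (Ne.symm hj)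
    have e2i : entry L2 (i+1) = entry L (i+1) + 1 :=
      entry_set_self L1 (i := i+1) (entry L (i+1) + 1) (by omega)
    have key : ∀ j, entry L2 j = if j = i then entry L i - 1
        else if j = i + 1 then entry L (i+1) + 1 else entry L j := by
      intro j
      split
      · rename_i hj; rw [hj, e2 i (by omega), e1i]
      · split
        · rename_i _ hj; subst hj; exact e2i
        · rename_i hj hj'; rw [e2 j hj', e1 j hj]
    refine ⟨?_, ?_, ?_⟩
    · have s1 : L1.sum + entry L i = L.sum + (entry L i - 1) := sum_set L i _ hilen
      have s2 : L2.sum + entry L1 (i+1) = L1.sum + (entry L (i+1) + 1) :=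
        sum_set L1 (i+1) _ (by omega)
      rw [e1 (i+1) (by omega)] at s2
      omega
    · intro j hj
      rw [hlen2] at hj
      rw [key j]
      have hnx := h1 (i+1) (by omega)
      split
      · omega
      · split
        · omega
        · exact h2 j hj
    · intro j hj
      rw [hlen2] at hj
      rw [key j]
      split
      · omega
      · split
        · omega
        · exact h1 j hj
  · rename_i hge
    have hieq : i + 1 = L.length := by omega
    set L1 := L.set i (entry L i - 1) with hL1
    have hlen1 : L1.length = L.length := by simp [hL1]
    have e1 : ∀ j, j ≠ i → entry L1 j = entry L j := fun j hj => entry_set_ne L _ (Ne.symm hj)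
    have e1i : entry L1 i = entry L i - 1 := entry_set_self L _ hilen
    have hlen' : (L1 ++ [1]).length = L.length + 1 := by simp [hlen1]
    have keyl : ∀ j, j < L.length → entry (L1 ++ [1]) j = entry L1 j := by
      intro j hj; exact entry_append_left L1 [1] (by omega)
    have keyr : entry (L1 ++ [1]) L.length = 1 := by
      rw [entry_append_right L1 [1] (by omega)]
      simp [entry, hlen1]
    refine ⟨?_, ?_, ?_⟩
    · rw [List.sum_append]
      have s1 : L1.sum + entry L i = L.sum + (entry L i - 1) := sum_set L i _ hilen
      simp only [List.sum_cons, List.sum_nil]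
      omega
    · intro j hj
      rw [hlen'] at hj
      rw [keyl j (by omega)]
      rcases eq_or_ne j i with rfl | hne
      · rw [e1i]; omega
      · rw [e1 j hne]; exact h2 j (by omega)
    · intro j hj
      rw [hlen'] at hj
      rcases Nat.lt_or_ge j L.length with hjl | hjl
      · rw [keyl j hjl]
        rcases eq_or_ne j i with rfl | hne
        · rw [e1i]; omega
        · rw [e1 j hne]; exact h1 j hjl
      · have : j = L.length := by omega
        rw [this, keyr]

lemma inv_reach {q : ℕ} {L : List ℕ} (hq : 1 ≤ q)
    (h : Relation.ReflTransGen MStep (Lm q) L) : SeqInv q L := by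
  induction h with
  | refl => exact inv_Lm q hq
  | tail _ hstep ih => exact inv_step hstep ih

/-- If `L` is obtained from `L_m` by finitely many applications of
the modification `M`, `i` is the smallest eligible index, and `ℓ_{i+1} = 0`
(i.e. `i` is the last index), then `ℓ_i ≥ 4`. -/
theorem min_eligible_last_entry_ge_four (q : ℕ) (hq : 1 ≤ q) (L : List ℕ)
    (hL : Relation.ReflTransGen MStep (Lm q) L)
    (i : ℕ) (hi : Eligible L i) (hmin : ∀ j < i, ¬ Eligible L j)
    (h0 : entry L (i + 1) = 0) :
    4 ≤ entry L i := by
  obtain ⟨hsum, h2, h1⟩ := inv_reach hq hL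
  obtain ⟨hilen, hi3, _⟩ := hi
  by_contra hcon
  have hei : entry L i = 3 := by omega
  -- i+1 is past the end
  have hlast : L.length = i + 1 := by
    by_contra h
    have : i + 1 < L.length := by omega
    have := h1 (i+1) this
    omega
  -- all entries before i are ≤ 2
  have key : ∀ k j, i = j + k → 1 ≤ k → entry L j ≤ 2 := by
    intro k
    induction k with
    | zero => intro j _ hk; omega
    | succ k ih =>
      intro j hj _
      by_contra hc
      have hj3 : 3 ≤ entry L j := by omega
      have hjlt : j < i := by omega
      have hnext : entry L (j + 1) ≤ 3 := by
        rcases Nat.eq_zero_or_pos k with rfl | hk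
        · have : j + 1 = i := by omega
          rw [this, hei]
        · exact (ih (j+1) (by omega) hk).trans (by omega)
      apply hmin j hjlt
      refine ⟨by omega, hj3, ?_⟩
      rcases Nat.lt_or_ge (entry L j) 4 with h4 | h4
      · have : entry L j = 3 := by omega
        rcases Nat.lt_or_ge (entry L (j+1)) 3 with h5 | h5
        · left; omega
        · right; exact ⟨this, by omega⟩
      · left; omega
  -- entries before i are exactly 2
  have keq : ∀ j < i, entry L j = 2 := by
    intro j hj
    have := key (i - j) j (by omega) (by omega)
    have := h2 j (by omega)
    omega
  -- compute sum
  rw [sum_eq_sum_entry, hlast, Finset.sum_range_succ] at hsum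
  rw [Finset.sum_congr rfl (fun j hj => keq j (Finset.mem_range.mp hj))] at hsum
  rw [Finset.sum_const, hei] at hsum
  simp at hsum
  omega
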